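/- The HWSD mechanism is 2-approximately hospital-strategyproof for binary OXS valuations: suppose all hospitals have binary OXS valuations and doctors have strict complete preference orders, and let X be the HWSD-optimal allocation for the true profile. For any hospital h and any binary OXS valuation v', let Y be the HWSD-optimal allocation for the profile in which v_h is replaced by v' (all else unchanged). Then v_h(Y_h) ≤ 2·v_h(X_h). -/

import Mathlib

open Finset

/-- A matroid rank function on subsets of a finite ground set. -/
def IsMRF {α : Type*} [DecidableEq α] (v : Finset α → ℤ) : Prop :=
  v ∅ = 0 ∧
  (∀ (S : Finset α) (d : α), d ∉ S →
    v (insert d S) - v S = 0 ∨ v (insert d S) - v S = 1) ∧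
  (∀ (S T : Finset α) (d : α), S ⊆ T → d ∉ T →
    v (insert d T) - v T ≤ v (insert d S) - v S)

/-- The bundle of doctors assigned to hospital `h` under allocation `X`. -/
def bundle {n m : ℕ} (X : Fin m → Option (Fin n)) (h : Fin n) : Finset (Fin m) :=
  Finset.univ.filter (fun d => X d = some h)

/-- An allocation is non-redundant if every hospital's bundle is independent. -/
def NonRedundant {n m : ℕ} (v : Fin n → Finset (Fin m) → ℤ)
    (X : Fin m → Option (Fin n)) : Prop :=
  ∀ h, v h (bundle X h) = (bundle X h).card

/-- Hospital utilitarian welfare. -/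
def USW {n m : ℕ} (v : Fin n → Finset (Fin m) → ℤ) (X : Fin m → Option (Fin n)) : ℤ :=
  ∑ h, v h (bundle X h)

/-- Doctor `d` strictly prefers the first outcome to the second; every hospital is
strictly preferred to being unallocated (`none`). -/
def OptStrictPref {n m : ℕ} (P : Fin m → Fin n → Fin n → Prop) (d : Fin m) :
    Option (Fin n) → Option (Fin n) → Prop
  | some h, some h' => P d h h'
  | some _, none => True
  | none, _ => False

/-- `(h, S)` is a blocking pair for `X`. -/
def IsBlockingPair {n m : ℕ} (v : Fin n → Finset (Fin m) → ℤ)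
    (P : Fin m → Fin n → Fin n → Prop) (X : Fin m → Option (Fin n))
    (h : Fin n) (S : Finset (Fin m)) : Prop :=
  v h S = S.card ∧ v h (bundle X h) < v h S ∧
    ∀ d ∈ S, X d = some h ∨ OptStrictPref P d (some h) (X d)

/-- An allocation is stable if it is non-redundant and admits no blocking pair. -/
def Stable {n m : ℕ} (v : Fin n → Finset (Fin m) → ℤ)
    (P : Fin m → Fin n → Fin n → Prop) (X : Fin m → Option (Fin n)) : Prop :=
  NonRedundant v X ∧ ¬ ∃ h S, IsBlockingPair v P X h S

/-- The HWSD ordering on non-redundant allocations: `X` beats `Y`. -/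
def HWSDgt {n m : ℕ} (v : Fin n → Finset (Fin m) → ℤ)
    (P : Fin m → Fin n → Fin n → Prop) (X Y : Fin m → Option (Fin n)) : Prop :=
  USW v Y < USW v X ∨
  (USW v X = USW v Y ∧ ∃ j : Fin m,
    OptStrictPref P j (X j) (Y j) ∧ ∀ k : Fin m, k < j → X k = Y k)

/-- `X` is the HWSD-optimal allocation: the greatest non-redundant allocation in the
HWSD ordering (the output of the High Welfare Serial Dictatorship mechanism). -/
def IsHWSDOpt {n m : ℕ} (v : Fin n → Finset (Fin m) → ℤ)
    (P : Fin m → Fin n → Fin n → Prop) (X : Fin m → Option (Fin n)) : Prop :=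
  NonRedundant v X ∧ ∀ Y, NonRedundant v Y → Y ≠ X → HWSDgt v P X Y

/-- A binary OXS valuation: `v S` is the size of a maximum matching of `S` into a
finite set of slots in a bipartite graph. -/
def IsBinaryOXS {α : Type*} (v : Finset α → ℤ) : Prop :=
  ∃ (k : ℕ) (E : α → Fin k → Prop),
    ∀ S : Finset α,
      IsGreatest {r : ℤ | ∃ M : Finset (α × Fin k),
        (∀ p ∈ M, p.1 ∈ S ∧ E p.1 p.2) ∧
        (∀ p ∈ M, ∀ q ∈ M, p.1 = q.1 → p = q) ∧
        (∀ p ∈ M, ∀ q ∈ M, p.2 = q.2 → p = q) ∧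
        (M.card : ℤ) = r} (v S)

/-!
Represent each valuation by its bipartite graph of doctors and slots, fix slot assignments for
all bundles of `X` and for the bundles of `Y` away from `h`, and let `T ⊆ Y_h` be a matched set
with `|T| = v_h(Y_h)`. A doctor of `T` whose slot is taken in `X_h` is charged to the doctor
holding it. Any other doctor `d ∈ T \ X_h` starts an exchange path `d = e₀ → e₁ → ⋯`, where
`e_{i+1}` holds under `Y` the slot that `e_i` holds under `X` at some hospital `≠ h`. This path
must reach `X_h`: otherwise swapping the doctors of the path between `X` and `Y` keeps both
allocations non-redundant, which two HWSD-optimal allocations cannot tolerate. Paths from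
distinct starts are disjoint, so each charge is injective into `X_h`, and
`v_h(Y_h) = |T| ≤ 2 |X_h|`.
-/

namespace BinaryOXS

variable {α : Type*} {k : ℕ}

def IsSlotAssignment (E : α → Fin k → Prop) (S : Finset α) (g : α → Option (Fin k)) :
    Prop :=
  (∀ d ∈ S, ∃ s, g d = some s ∧ E d s) ∧ Set.InjOn g S

def IsRep (v : Finset α → ℤ) (E : α → Fin k → Prop) : Prop :=
  ∀ S : Finset α,
    IsGreatest {r : ℤ | ∃ M : Finset (α × Fin k),
      (∀ p ∈ M, p.1 ∈ S ∧ E p.1 p.2) ∧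
      (∀ p ∈ M, ∀ q ∈ M, p.1 = q.1 → p = q) ∧
      (∀ p ∈ M, ∀ q ∈ M, p.2 = q.2 → p = q) ∧
      (M.card : ℤ) = r} (v S)

variable {E : α → Fin k → Prop} {v : Finset α → ℤ} {S T : Finset α} {g : α → Option (Fin k)}

theorem IsSlotAssignment.mono (hg : IsSlotAssignment E S g) (hTS : T ⊆ S) :
    IsSlotAssignment E T g :=
  ⟨fun d hd => hg.1 d (hTS hd), hg.2.mono hTS⟩

theorem IsSlotAssignment.update [DecidableEq α] (hg : IsSlotAssignment E S g) {d : α}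
    {s : Fin k} (hds : E d s) (hs : ∀ e ∈ S, g e ≠ some s) :
    IsSlotAssignment E (insert d S) (Function.update g d (some s)) := by
  refine ⟨fun e he => ?_, fun e he e' he' hee' => ?_⟩
  · by_cases hed : e = d
    · subst hed
      exact ⟨s, Function.update_self .., hds⟩
    · obtain ⟨t, hgt, het⟩ := hg.1 e ((mem_insert.1 he).resolve_left hed)
      exact ⟨t, by rwa [Function.update_of_ne hed], het⟩
  · by_cases hed : e = d <;> by_cases hed' : e' = d
    · rw [hed, hed']
    · subst hed
      rw [Function.update_self, Function.update_of_ne hed'] at hee'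
      exact absurd hee'.symm (hs e' ((mem_insert.1 he').resolve_left hed'))
    · subst hed'
      rw [Function.update_self, Function.update_of_ne hed] at hee'
      exact absurd hee' (hs e ((mem_insert.1 he).resolve_left hed))
    · rw [Function.update_of_ne hed, Function.update_of_ne hed'] at hee'
      exact hg.2 ((mem_insert.1 he).resolve_left hed) ((mem_insert.1 he').resolve_left hed')
        hee'

theorem IsSlotAssignment.piecewise [DecidableEq α] {S' Δ : Finset α} {g' : α → Option (Fin k)}
    (hg' : IsSlotAssignment E S' g') (hg : IsSlotAssignment E S g)
    (hcross : ∀ e ∈ S' ∩ Δ, ∀ e' ∈ S \ Δ, g' e ≠ g e') :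
    IsSlotAssignment E (S' ∩ Δ ∪ S \ Δ) (Δ.piecewise g' g) := by
  refine ⟨fun e he => ?_, fun e he e' he' hee' => ?_⟩
  · rcases mem_union.1 he with he | he
    · rw [mem_inter] at he
      rw [Δ.piecewise_eq_of_mem _ _ he.2]
      exact hg'.1 e he.1
    · rw [mem_sdiff] at he
      rw [Δ.piecewise_eq_of_notMem _ _ he.2]
      exact hg.1 e he.1
  · simp only [coe_union, coe_inter, coe_sdiff, Set.mem_union, Set.mem_inter_iff,
      Set.mem_sdiff, mem_coe] at he he'
    rcases he with ⟨he, heΔ⟩ | ⟨he, heΔ⟩ <;> rcases he' with ⟨he', heΔ'⟩ | ⟨he', heΔ'⟩ <;>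
      simp only [Δ.piecewise_eq_of_mem _ _, Δ.piecewise_eq_of_notMem _ _, heΔ, heΔ',
        not_false_eq_true] at hee'
    · exact hg'.2 he he' hee'
    · exact absurd hee' (hcross e (mem_inter.2 ⟨he, heΔ⟩) e' (mem_sdiff.2 ⟨he', heΔ'⟩))
    · exact absurd hee'.symm (hcross e' (mem_inter.2 ⟨he', heΔ'⟩) e (mem_sdiff.2 ⟨he, heΔ⟩))
    · exact hg.2 he he' hee'

namespace IsRep

theorem le_card (hv : IsRep v E) (S : Finset α) : v S ≤ #S := by
  obtain ⟨M, hMS, hM1, -, hMcard⟩ := (hv S).1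
  rw [← hMcard, Nat.cast_le]
  exact card_le_card_of_injOn Prod.fst (fun p hp => (hMS p hp).1)
    (fun p hp q hq => hM1 p hp q hq)

theorem eq_card_of_isSlotAssignment (hv : IsRep v E) (hg : IsSlotAssignment E S g) :
    v S = #S := by
  classical
  let M := (S ×ˢ univ).filter fun p : α × Fin k => g p.1 = some p.2
  have hmem : ∀ {p}, p ∈ M ↔ p.1 ∈ S ∧ g p.1 = some p.2 := by simp [M]
  have hfst : ∀ {p q}, p ∈ M → q ∈ M → p.1 = q.1 → p = q := by
    intro p q hp hq hpq
    have hgq := (hmem.1 hq).2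
    rw [← hpq, (hmem.1 hp).2] at hgq
    exact Prod.ext hpq (Option.some_injective _ hgq)
  have hMcard : #M = #S := by
    refine card_bij (fun p _ => p.1) (fun p hp => (hmem.1 hp).1) (fun p hp q hq => hfst hp hq)
      fun d hd => ?_
    obtain ⟨s, hs, -⟩ := hg.1 d hd
    exact ⟨(d, s), hmem.2 ⟨hd, hs⟩, rfl⟩
  refine le_antisymm (hv.le_card S) (hMcard ▸ (hv S).2 ⟨M, fun p hp => ?_,
    fun p hp q hq => hfst hp hq, fun p hp q hq hpq => ?_, rfl⟩)
  · obtain ⟨hpS, hgp⟩ := hmem.1 hp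
    obtain ⟨s, hs, hE⟩ := hg.1 p.1 hpS
    rw [hgp, Option.some_inj] at hs
    exact ⟨hpS, hs ▸ hE⟩
  · refine Prod.ext (hg.2 (hmem.1 hp).1 (hmem.1 hq).1 ?_) hpq
    rw [(hmem.1 hp).2, (hmem.1 hq).2, hpq]

theorem exists_isSlotAssignment_eq (hv : IsRep v E) (S : Finset α) :
    ∃ T ⊆ S, ∃ g, IsSlotAssignment E T g ∧ v S = #T := by
  classical
  obtain ⟨M, hMS, hM1, hM2, hMcard⟩ := (hv S).1
  let g : α → Option (Fin k) := fun d => if hd : ∃ s, (d, s) ∈ M then some hd.choose else none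
  have hgM : ∀ d s, g d = some s → (d, s) ∈ M := by
    intro d s hds
    by_cases hd : ∃ s, (d, s) ∈ M
    · simp only [g, dif_pos hd, Option.some_inj] at hds
      exact hds ▸ hd.choose_spec
    · simp [g, dif_neg hd] at hds
  have hgT : ∀ d ∈ M.image Prod.fst, ∃ s, g d = some s ∧ E d s := by
    intro d hd
    have hex : ∃ s, (d, s) ∈ M := by
      obtain ⟨p, hp, rfl⟩ := mem_image.1 hd
      exact ⟨p.2, hp⟩
    exact ⟨hex.choose, dif_pos hex, (hMS _ hex.choose_spec).2⟩
  refine ⟨M.image Prod.fst, fun d hd => ?_, g, ⟨hgT, fun d hd d' _ hdd' => ?_⟩, ?_⟩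
  · obtain ⟨p, hp, rfl⟩ := mem_image.1 hd
    exact (hMS p hp).1
  · obtain ⟨s, hs, -⟩ := hgT d hd
    rw [hs] at hdd'
    exact congrArg Prod.fst (hM2 _ (hgM d s hs) _ (hgM d' s hdd'.symm) rfl)
  · rw [← hMcard, card_image_of_injOn fun p hp q hq => hM1 p hp q hq]

theorem exists_isSlotAssignment_of_eq_card (hv : IsRep v E) (hS : v S = #S) :
    ∃ g, IsSlotAssignment E S g := by
  obtain ⟨T, hTS, g, hg, hT⟩ := hv.exists_isSlotAssignment_eq S
  rw [hS, Nat.cast_inj] at hT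
  exact ⟨g, eq_of_subset_of_card_le hTS hT.le ▸ hg⟩

theorem eq_card_of_subset (hv : IsRep v E) (hS : v S = #S) (hTS : T ⊆ S) : v T = #T :=
  have ⟨_, hg⟩ := hv.exists_isSlotAssignment_of_eq_card hS
  hv.eq_card_of_isSlotAssignment (hg.mono hTS)

end IsRep

end BinaryOXS

theorem Relation.ReflTransGen.of_rel_of_leftUnique {α : Type*} {r : α → α → Prop} {a b c : α}
    (hr : Relator.LeftUnique r) (ha : ∀ x, ¬ r x a) (hac : ReflTransGen r a c) (hbc : r b c) :
    ReflTransGen r a b := by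
  rcases hac.cases_tail with rfl | ⟨x, hax, hxc⟩
  · exact absurd hbc (ha b)
  · exact hr hbc hxc ▸ hax

theorem Relation.ReflTransGen.eq_of_leftUnique {α : Type*} {r : α → α → Prop} {a b c : α}
    (hr : Relator.LeftUnique r) (ha : ∀ x, ¬ r x a) (hb : ∀ x, ¬ r x b)
    (hac : ReflTransGen r a c) (hbc : ReflTransGen r b c) : a = b := by
  have hswap : Relator.RightUnique (Function.swap r) := fun _ _ _ hx hy => hr hx hy
  rcases (reflTransGen_swap.2 hac).total_of_right_unique hswap (reflTransGen_swap.2 hbc)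
    with hab | hba
  · rcases (reflTransGen_swap.1 hab).cases_tail with rfl | ⟨x, -, hxa⟩
    exacts [rfl, absurd hxa (ha x)]
  · rcases (reflTransGen_swap.1 hba).cases_tail with rfl | ⟨x, -, hxb⟩
    exacts [rfl, absurd hxb (hb x)]

section Allocation

variable {n m : ℕ}

@[simp]
theorem mem_bundle {X : Fin m → Option (Fin n)} {a : Fin n} {d : Fin m} :
    d ∈ bundle X a ↔ X d = some a := by
  simp [bundle]

def allocated (X : Fin m → Option (Fin n)) : Finset (Fin m) :=
  univ.filter fun d => (X d).isSome

theorem usw_eq_card_allocated {v : Fin n → Finset (Fin m) → ℤ} {X : Fin m → Option (Fin n)}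
    (hX : NonRedundant v X) : USW v X = #(allocated X) := by
  have hbiUnion : allocated X = univ.biUnion (bundle X) := by
    ext d
    simp [allocated, Option.isSome_iff_exists]
  have hdisj : ((univ : Finset (Fin n)) : Set (Fin n)).PairwiseDisjoint (bundle X) := by
    intro a _ b _ hab
    exact disjoint_left.2 fun d hda hdb => hab (Option.some_injective _
      ((mem_bundle.1 hda).symm.trans (mem_bundle.1 hdb)))
  rw [USW, hbiUnion, card_biUnion hdisj, Nat.cast_sum]
  exact sum_congr rfl fun a _ => hX a

theorem bundle_piecewise (X Y : Fin m → Option (Fin n)) (Δ : Finset (Fin m)) (a : Fin n) :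
    bundle (Δ.piecewise Y X) a = bundle Y a ∩ Δ ∪ bundle X a \ Δ := by
  ext d
  by_cases hd : d ∈ Δ <;> simp [hd]

theorem card_allocated_piecewise_add (X Y : Fin m → Option (Fin n)) (Δ : Finset (Fin m)) :
    #(allocated (Δ.piecewise Y X)) + #(allocated (Δ.piecewise X Y)) =
      #(allocated X) + #(allocated Y) := by
  simp only [allocated, card_filter, ← sum_add_distrib]
  refine sum_congr rfl fun d _ => ?_
  by_cases hd : d ∈ Δ <;> simp [hd, add_comm]

variable {P : Fin m → Fin n → Fin n → Prop}

theorem OptStrictPref.asymm [∀ d, Std.Asymm (P d)] {d : Fin m} {o o' : Option (Fin n)}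
    (h : OptStrictPref P d o o') : ¬ OptStrictPref P d o' o := by
  match o, o' with
  | some a, some b => exact _root_.asymm (r := P d) h
  | some _, none | none, _ => simp [OptStrictPref] at *

theorem OptStrictPref.ne [∀ d, Std.Asymm (P d)] {d : Fin m} {o o' : Option (Fin n)}
    (h : OptStrictPref P d o o') : o ≠ o' := by
  rintro rfl
  exact h.asymm h

variable {v : Fin n → Finset (Fin m) → ℤ} {X Z : Fin m → Option (Fin n)}

theorem IsHWSDOpt.usw_le (hX : IsHWSDOpt v P X) (hZ : NonRedundant v Z) : USW v Z ≤ USW v X := by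
  by_cases hZX : Z = X
  · rw [hZX]
  · rcases hX.2 Z hZ hZX with hlt | ⟨heq, -⟩
    exacts [hlt.le, heq.ge]

theorem IsHWSDOpt.exists_first_pref (hX : IsHWSDOpt v P X) (hZ : NonRedundant v Z)
    (hZX : Z ≠ X) (hUSW : USW v Z = USW v X) :
    ∃ j, OptStrictPref P j (X j) (Z j) ∧ ∀ i < j, X i = Z i := by
  rcases hX.2 Z hZ hZX with hlt | ⟨-, hj⟩
  exacts [absurd hUSW hlt.ne, hj]

/-- The swap conserves the total number of allocated doctors, so neither side gains welfare,
and then both sides would have to win the serial-dictatorship tie-break at the same first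
doctor where they disagree. -/
theorem IsHWSDOpt.not_nonRedundant_swap [∀ d, Std.Asymm (P d)] {v₁ v₂ : Fin n → Finset (Fin m) → ℤ}
    {X Y : Fin m → Option (Fin n)} (hX : IsHWSDOpt v₁ P X) (hY : IsHWSDOpt v₂ P Y)
    {Δ : Finset (Fin m)} (hΔ : ∃ e ∈ Δ, X e ≠ Y e) :
    ¬ (NonRedundant v₁ (Δ.piecewise Y X) ∧ NonRedundant v₂ (Δ.piecewise X Y)) := by
  rintro ⟨hA, hB⟩
  obtain ⟨e, heΔ, hXYe⟩ := hΔ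
  have hsum := card_allocated_piecewise_add X Y Δ
  have hA_le := hX.usw_le hA
  have hB_le := hY.usw_le hB
  rw [usw_eq_card_allocated hA, usw_eq_card_allocated hX.1] at hA_le
  rw [usw_eq_card_allocated hB, usw_eq_card_allocated hY.1] at hB_le
  obtain ⟨j, hj, hbelow⟩ := hX.exists_first_pref hA
    (fun h => hXYe ((by simpa [heΔ] using congrFun h e : Y e = X e).symm))
    (by rw [usw_eq_card_allocated hA, usw_eq_card_allocated hX.1]; omega)
  obtain ⟨j', hj', hbelow'⟩ := hY.exists_first_pref hB
    (fun h => hXYe (by simpa [heΔ] using congrFun h e : X e = Y e))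
    (by rw [usw_eq_card_allocated hB, usw_eq_card_allocated hY.1]; omega)
  have hagree : ∀ i, X i = Δ.piecewise Y X i ↔ Y i = Δ.piecewise X Y i := by
    intro i
    by_cases hi : i ∈ Δ <;> simp [hi, eq_comm]
  have hjj' : j = j' := by
    rcases lt_trichotomy j j' with hlt | heq | hgt
    · exact absurd ((hagree j).2 (hbelow' j hlt)) hj.ne
    · exact heq
    · exact absurd ((hagree j').1 (hbelow j' hgt)) hj'.ne
  subst hjj'
  have hjΔ : j ∈ Δ := by
    by_contra hjΔ
    exact hj.ne (by simp [hjΔ])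
  simp only [Δ.piecewise_eq_of_mem _ _ hjΔ] at hj hj'
  exact hj.asymm hj'

end Allocation

section Exchange

open Relation BinaryOXS

variable {n m : ℕ} {k : Fin n → ℕ} {h : Fin n} {X Y : Fin m → Option (Fin n)}
  {fX fY : ∀ a, Fin m → Option (Fin (k a))}

variable (h X Y fX fY) in
def SlotSucc (w e : Fin m) : Prop :=
  ∃ a ≠ h, X w = some a ∧ Y e = some a ∧ fX a w = fY a e

theorem SlotSucc.target_ne {w e : Fin m} (hwe : SlotSucc h X Y fX fY w e) : Y e ≠ some h := by
  obtain ⟨a, ha, -, hYe, -⟩ := hwe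
  rw [hYe]
  exact fun hah => ha (Option.some_injective _ hah)

theorem slotSucc_leftUnique (hfX : ∀ a, Set.InjOn (fX a) (bundle X a)) :
    Relator.LeftUnique (SlotSucc h X Y fX fY) := by
  rintro w w' e ⟨a, -, hXw, hYe, hwe⟩ ⟨a', -, hXw', hYe', hw'e⟩
  obtain rfl : a = a' := Option.some_injective _ (hYe.symm.trans hYe')
  exact hfX a (mem_bundle.2 hXw) (mem_bundle.2 hXw') (hwe.trans hw'e.symm)

variable {E : ∀ a, Fin m → Fin (k a) → Prop} {v : Fin n → Finset (Fin m) → ℤ}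

theorem nonRedundant_piecewise_of_backward_closed (hE : ∀ a, IsRep (v a) (E a))
    (hfX : ∀ a, IsSlotAssignment (E a) (bundle X a) (fX a))
    (hfY : ∀ a ≠ h, IsSlotAssignment (E a) (bundle Y a) (fY a))
    {d : Fin m} {s : Fin (k h)} (hds : E h d s) (hs : ∀ e ∈ bundle X h, fX h e ≠ some s)
    {Δ : Finset (Fin m)} (hΔX : ∀ e ∈ Δ, X e ≠ some h) (hΔY : ∀ e ∈ Δ, Y e = some h → e = d)
    (hback : ∀ e ∈ Δ, ∀ e', SlotSucc h X Y fX fY e' e → e' ∈ Δ) :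
    NonRedundant v (Δ.piecewise Y X) := by
  intro b
  rw [bundle_piecewise]
  rcases eq_or_ne b h with rfl | hb
  · refine (hE b).eq_card_of_isSlotAssignment (((hfX b).update hds hs).mono fun e he => ?_)
    rcases mem_union.1 he with he | he
    · rw [mem_inter, mem_bundle] at he
      exact mem_insert.2 (Or.inl (hΔY e he.2 he.1))
    · exact mem_insert_of_mem (mem_sdiff.1 he).1
  · refine (hE b).eq_card_of_isSlotAssignment ((hfY b hb).piecewise (hfX b) ?_)
    intro e he e' he' hee'
    rw [mem_inter, mem_bundle] at he
    rw [mem_sdiff, mem_bundle] at he'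
    exact he'.2 (hback e he.2 e' ⟨b, hb, he'.1, he.1, hee'.symm⟩)

theorem nonRedundant_update_piecewise_of_forward_closed {k' : ℕ} {E' : Fin m → Fin k' → Prop}
    {v' : Finset (Fin m) → ℤ} (hE : ∀ a, IsRep (v a) (E a)) (hE' : IsRep v' E')
    (hYh : v' (bundle Y h) = #(bundle Y h))
    (hfX : ∀ a, IsSlotAssignment (E a) (bundle X a) (fX a))
    (hfY : ∀ a ≠ h, IsSlotAssignment (E a) (bundle Y a) (fY a))
    {Δ : Finset (Fin m)} (hΔX : ∀ e ∈ Δ, X e ≠ some h)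
    (hfwd : ∀ e ∈ Δ, ∀ e', SlotSucc h X Y fX fY e e' → e' ∈ Δ) :
    NonRedundant (Function.update v h v') (Δ.piecewise X Y) := by
  intro b
  rw [bundle_piecewise]
  rcases eq_or_ne b h with rfl | hb
  · rw [Function.update_self]
    refine hE'.eq_card_of_subset hYh fun e he => ?_
    rcases mem_union.1 he with he | he
    · rw [mem_inter, mem_bundle] at he
      exact absurd he.1 (hΔX e he.2)
    · exact (mem_sdiff.1 he).1
  · rw [Function.update_of_ne hb]
    refine (hE b).eq_card_of_isSlotAssignment ((hfX b).piecewise (hfY b hb) ?_)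
    intro e he e' he' hee'
    rw [mem_inter, mem_bundle] at he
    rw [mem_sdiff, mem_bundle] at he'
    exact he'.2 (hfwd e he.2 e' ⟨b, hb, he.1, he'.1, hee'⟩)

variable {P : Fin m → Fin n → Fin n → Prop} [∀ d, Std.Asymm (P d)] {k' : ℕ}
  {E' : Fin m → Fin k' → Prop} {v' : Finset (Fin m) → ℤ}

theorem exists_reflTransGen_mem_bundle (hE : ∀ a, IsRep (v a) (E a)) (hE' : IsRep v' E')
    (hX : IsHWSDOpt v P X) (hY : IsHWSDOpt (Function.update v h v') P Y)
    (hfX : ∀ a, IsSlotAssignment (E a) (bundle X a) (fX a))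
    (hfY : ∀ a ≠ h, IsSlotAssignment (E a) (bundle Y a) (fY a))
    {d : Fin m} (hYd : Y d = some h) (hXd : X d ≠ some h)
    {s : Fin (k h)} (hds : E h d s) (hs : ∀ e ∈ bundle X h, fX h e ≠ some s) :
    ∃ e ∈ bundle X h, ReflTransGen (SlotSucc h X Y fX fY) d e := by
  classical
  by_contra! hnone
  set R := SlotSucc h X Y fX fY
  let Δ := univ.filter (ReflTransGen R d)
  have hmemΔ : ∀ {e}, e ∈ Δ ↔ ReflTransGen R d e := by simp [Δ]
  have hΔX : ∀ e ∈ Δ, X e ≠ some h := fun e he hXe => hnone e (mem_bundle.2 hXe) (hmemΔ.1 he)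
  have hΔY : ∀ e ∈ Δ, Y e = some h → e = d := by
    intro e he hYe
    rcases (hmemΔ.1 he).cases_tail with rfl | ⟨x, -, hxe⟩
    exacts [rfl, absurd hYe hxe.target_ne]
  have hback : ∀ e ∈ Δ, ∀ e', R e' e → e' ∈ Δ := fun e he e' he'e =>
    hmemΔ.2 ((hmemΔ.1 he).of_rel_of_leftUnique (slotSucc_leftUnique fun a => (hfX a).2)
      (fun x hx => hx.target_ne hYd) he'e)
  have hfwd : ∀ e ∈ Δ, ∀ e', R e e' → e' ∈ Δ := fun e he e' hee' => hmemΔ.2 ((hmemΔ.1 he).tail hee')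
  have hYh : v' (bundle Y h) = #(bundle Y h) := by simpa using hY.1 h
  exact hX.not_nonRedundant_swap hY ⟨d, hmemΔ.2 .refl, by rw [hYd]; exact hXd⟩
    ⟨nonRedundant_piecewise_of_backward_closed hE hfX hfY hds hs hΔX hΔY hback,
      nonRedundant_update_piecewise_of_forward_closed hE hE' hYh hfX hfY hΔX hfwd⟩

theorem card_le_two_mul_card_bundle (hE : ∀ a, IsRep (v a) (E a)) (hE' : IsRep v' E')
    (hX : IsHWSDOpt v P X) (hY : IsHWSDOpt (Function.update v h v') P Y)
    (hfX : ∀ a, IsSlotAssignment (E a) (bundle X a) (fX a))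
    (hfY : ∀ a ≠ h, IsSlotAssignment (E a) (bundle Y a) (fY a))
    {T : Finset (Fin m)} (hTY : T ⊆ bundle Y h) (hfT : IsSlotAssignment (E h) T (fY h)) :
    #T ≤ 2 * #(bundle X h) := by
  classical
  set R := SlotSucc h X Y fX fY
  have hpred : ∀ d ∈ T, ∀ x, ¬ R x d := fun d hd x hx => hx.target_ne (mem_bundle.1 (hTY hd))
  let used : Fin m → Prop := fun d => ∃ e ∈ bundle X h, fX h e = fY h d
  have hused : #(T.filter used) ≤ #(bundle X h) := by
    refine card_le_card_of_forall_subsingleton (fun d e => fX h e = fY h d)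
      (fun d hd => (mem_filter.1 hd).2) fun e _ d₁ hd₁ d₂ hd₂ => ?_
    exact hfT.2 (mem_filter.1 hd₁.1).1 (mem_filter.1 hd₂.1).1 (hd₁.2.symm.trans hd₂.2)
  have hfree : #(T.filter (¬ used ·)) ≤ #(bundle X h) := by
    refine card_le_card_of_forall_subsingleton (ReflTransGen R) (fun d hd => ?_)
      fun e _ d₁ hd₁ d₂ hd₂ => ?_
    · obtain ⟨hdT, hdfree⟩ := mem_filter.1 hd
      by_cases hXd : X d = some h
      · exact ⟨d, mem_bundle.2 hXd, .refl⟩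
      obtain ⟨s, hs, hds⟩ := hfT.1 d hdT
      exact exists_reflTransGen_mem_bundle hE hE' hX hY hfX hfY (mem_bundle.1 (hTY hdT)) hXd
        hds fun e he hes => hdfree ⟨e, he, hes.trans hs.symm⟩
    · exact ReflTransGen.eq_of_leftUnique (slotSucc_leftUnique fun a => (hfX a).2)
        (hpred d₁ (mem_filter.1 hd₁.1).1) (hpred d₂ (mem_filter.1 hd₂.1).1) hd₁.2 hd₂.2
  have hsplit := card_filter_add_card_filter_not (s := T) used
  omega

end Exchange

open BinaryOXS in
/-- Theorem 3.5: the HWSD mechanism is 2-approximately hospital-strategyproof when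
hospitals have binary OXS valuations. -/
theorem hwsd_two_approx_hospital_sp {n m : ℕ} (v : Fin n → Finset (Fin m) → ℤ)
    (P : Fin m → Fin n → Fin n → Prop)
    (hv : ∀ h, IsBinaryOXS (v h)) (hP : ∀ d, IsStrictTotalOrder (Fin n) (P d))
    (h : Fin n) (v' : Finset (Fin m) → ℤ) (hv' : IsBinaryOXS v')
    (X Y : Fin m → Option (Fin n))
    (hX : IsHWSDOpt v P X) (hY : IsHWSDOpt (Function.update v h v') P Y) :
    v h (bundle Y h) ≤ 2 * v h (bundle X h) := by
  have : ∀ d, Std.Asymm (P d) := fun d => haveI := hP d; inferInstance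
  choose k E hE using hv
  replace hE : ∀ a, IsRep (v a) (E a) := hE
  obtain ⟨k', E', hE' : IsRep v' E'⟩ := hv'
  choose fX hfX using fun a => (hE a).exists_isSlotAssignment_of_eq_card (hX.1 a)
  choose T hTY fY hfY hvT using fun a => (hE a).exists_isSlotAssignment_eq (bundle Y a)
  have hfY' : ∀ a ≠ h, IsSlotAssignment (E a) (bundle Y a) (fY a) := by
    intro a ha
    have hYa := hY.1 a
    rw [Function.update_of_ne ha, hvT a, Nat.cast_inj] at hYa
    exact eq_of_subset_of_card_le (hTY a) hYa.ge ▸ hfY a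
  rw [hvT h, hX.1 h]
  exact_mod_cast card_le_two_mul_card_bundle hE hE' hX hY hfX hfY' (hTY h) (hfY h)
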